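/- arXiv:2103.09888 — 4 statements merged into one kernel-verified Lean document; each statement's English description precedes it below -/
import Mathlib

section
/- Let α, τ > 0, let h : [0,∞) → ℝ³ be any function, and let m : [0,∞) → ℝ³ be twice differentiable with |m(t)| = 1 for all t ≥ 0. Then the following two statements are equivalent for all t ≥ 0: (i) m satisfies the inertial Landau–Lifshitz–Gilbert equation m' = −m × (h − α m' − τ m''); (ii) m satisfies the linear-velocity form τ m'' + α m' + m × m' = h − (h·m) m − τ |m'|² m. -/
open scoped InnerProductSpace
open Matrix

/-- The cross product on `ℝ³`, realized as `EuclideanSpace ℝ (Fin 3)`. -/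
noncomputable def cross3 (a b : EuclideanSpace ℝ (Fin 3)) : EuclideanSpace ℝ (Fin 3) :=
  (WithLp.equiv 2 (Fin 3 → ℝ)).symm
    (crossProduct ((WithLp.equiv 2 (Fin 3 → ℝ)) a) ((WithLp.equiv 2 (Fin 3 → ℝ)) b))

lemma cross_cross3' (a b c : Fin 3 → ℝ) :
    crossProduct a (crossProduct b c) = (a ⬝ᵥ c) • b - (a ⬝ᵥ b) • c := by
  funext i
  fin_cases i <;>
    simp [crossProduct, dotProduct, Fin.sum_univ_three] <;> ring

lemma inner_eq_dot3 (x y : EuclideanSpace ℝ (Fin 3)) :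
    ⟪x, y⟫_ℝ = (WithLp.equiv 2 (Fin 3 → ℝ) x) ⬝ᵥ (WithLp.equiv 2 (Fin 3 → ℝ) y) := by
  simp [PiLp.inner_apply, dotProduct, mul_comm]

/-- Equivalence of the inertial LLG equation `m' = −m × (h − α m' − τ m'')` with its
linear-velocity reformulation `τ m'' + α m' + m × m' = h − (h·m) m − τ|m'|² m`, pointwise
in time, for any twice differentiable `m : [0,∞) → ℝ³` with `|m(t)| = 1` for all `t ≥ 0`. -/
theorem illg_iff_linear_velocity_form
    (α τ : ℝ) (hα : 0 < α) (hτ : 0 < τ)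
    (h m v a : ℝ → EuclideanSpace ℝ (Fin 3))
    (hm : ∀ t ∈ Set.Ici (0 : ℝ), HasDerivWithinAt m (v t) (Set.Ici 0) t)
    (hv : ∀ t ∈ Set.Ici (0 : ℝ), HasDerivWithinAt v (a t) (Set.Ici 0) t)
    (hunit : ∀ t ∈ Set.Ici (0 : ℝ), ‖m t‖ = 1) :
    ∀ t ∈ Set.Ici (0 : ℝ),
      (v t = -cross3 (m t) (h t - α • v t - τ • a t)
        ↔ τ • a t + α • v t + cross3 (m t) (v t)
            = h t - ⟪h t, m t⟫_ℝ • m t - (τ * ‖v t‖ ^ 2) • m t) := by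
  -- first, m ⬝ v = 0 on Ici 0
  have hmv : ∀ t ∈ Set.Ici (0 : ℝ), ⟪m t, v t⟫_ℝ = 0 := by
    intro t ht
    have hud : UniqueDiffWithinAt ℝ (Set.Ici (0:ℝ)) t := (uniqueDiffOn_Ici 0) t ht
    have h1 : HasDerivWithinAt (fun s => ⟪m s, m s⟫_ℝ) (⟪m t, v t⟫_ℝ + ⟪v t, m t⟫_ℝ)
        (Set.Ici 0) t := (hm t ht).inner ℝ (hm t ht)
    have h2 : HasDerivWithinAt (fun s => ⟪m s, m s⟫_ℝ) 0 (Set.Ici 0) t := by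
      have heq : Set.EqOn (fun s => ⟪m s, m s⟫_ℝ) (fun _ => (1:ℝ)) (Set.Ici 0) := by
        intro s hs
        show ⟪m s, m s⟫_ℝ = 1
        rw [real_inner_self_eq_norm_sq, hunit s hs]; norm_num
      exact (hasDerivWithinAt_const t _ (1:ℝ)).congr heq (heq ht)
    have := hud.eq_deriv _ h1 h2
    have hsymm : ⟪v t, m t⟫_ℝ = ⟪m t, v t⟫_ℝ := real_inner_comm _ _
    linarith [this, hsymm.symm ▸ this]
  have hma : ∀ t ∈ Set.Ici (0 : ℝ), ⟪m t, a t⟫_ℝ = -‖v t‖ ^ 2 := by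
    intro t ht
    have hud : UniqueDiffWithinAt ℝ (Set.Ici (0:ℝ)) t := (uniqueDiffOn_Ici 0) t ht
    have h1 : HasDerivWithinAt (fun s => ⟪m s, v s⟫_ℝ) (⟪m t, a t⟫_ℝ + ⟪v t, v t⟫_ℝ)
        (Set.Ici 0) t := (hm t ht).inner ℝ (hv t ht)
    have h2 : HasDerivWithinAt (fun s => ⟪m s, v s⟫_ℝ) 0 (Set.Ici 0) t := by
      have heq : Set.EqOn (fun s => ⟪m s, v s⟫_ℝ) (fun _ => (0:ℝ)) (Set.Ici 0) := by
        intro s hs; exact hmv s hs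
      exact (hasDerivWithinAt_const t _ (0:ℝ)).congr heq (heq ht)
    have := hud.eq_deriv _ h1 h2
    have : ⟪m t, a t⟫_ℝ + ⟪v t, v t⟫_ℝ = 0 := this
    have hvv : ⟪v t, v t⟫_ℝ = ‖v t‖ ^ 2 := real_inner_self_eq_norm_sq _
    linarith
  intro t ht
  -- pass to plain vectors in `Fin 3 → ℝ`
  set e := WithLp.equiv 2 (Fin 3 → ℝ) with he
  set M := e (m t)
  set V := e (v t)
  set A := e (a t)
  set H := e (h t)
  have hMV : M ⬝ᵥ V = 0 := by rw [← inner_eq_dot3]; exact hmv t ht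
  have hVM : V ⬝ᵥ M = 0 := by rw [dotProduct_comm]; exact hMV
  have hMA : M ⬝ᵥ A = -‖v t‖ ^ 2 := by rw [← inner_eq_dot3]; exact hma t ht
  have hMM : M ⬝ᵥ M = 1 := by
    rw [← inner_eq_dot3, real_inner_self_eq_norm_sq, hunit t ht]; norm_num
  have hMH : M ⬝ᵥ H = H ⬝ᵥ M := dotProduct_comm _ _
  -- reduce the two EuclideanSpace equations to equations in `Fin 3 → ℝ`
  have key1 : (v t = -cross3 (m t) (h t - α • v t - τ • a t)) ↔
      V = -(crossProduct M (H - α • V - τ • A)) := by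
    rw [← (WithLp.equiv 2 (Fin 3 → ℝ)).injective.eq_iff]
    simp only [cross3, Equiv.apply_symm_apply, WithLp.equiv_apply, WithLp.ofLp_neg, WithLp.ofLp_sub,
      WithLp.ofLp_smul, WithLp.equiv_symm_apply, WithLp.ofLp_toLp]
    exact Iff.rfl
  have key2 : (τ • a t + α • v t + cross3 (m t) (v t)
        = h t - ⟪h t, m t⟫_ℝ • m t - (τ * ‖v t‖ ^ 2) • m t) ↔
      (τ • A + α • V + crossProduct M V
        = H - (H ⬝ᵥ M) • M - (τ * ‖v t‖ ^ 2) • M) := by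
    rw [← (WithLp.equiv 2 (Fin 3 → ℝ)).injective.eq_iff]
    simp only [cross3, Equiv.apply_symm_apply, WithLp.equiv_apply, WithLp.ofLp_add, WithLp.ofLp_sub,
      WithLp.ofLp_smul, WithLp.equiv_symm_apply, WithLp.ofLp_toLp, inner_eq_dot3]
    exact Iff.rfl
  rw [key1, key2]
  have lin : crossProduct M (H - α • V - τ • A)
      = crossProduct M H - α • crossProduct M V - τ • crossProduct M A := by
    rw [map_sub, map_sub, LinearMap.map_smul, LinearMap.map_smul]
  constructor
  · intro hi
    have hdot : M ⬝ᵥ (H - α • V - τ • A) = M ⬝ᵥ H + τ * ‖v t‖ ^ 2 := by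
      simp only [dotProduct_sub, dotProduct_smul, hMV, hMA, smul_eq_mul]
      ring
    have hCV : crossProduct M V
        = (H - α • V - τ • A) - (M ⬝ᵥ H + τ * ‖v t‖ ^ 2) • M := by
      conv_lhs => rw [hi]
      rw [map_neg, cross_cross3', hMM, hdot]
      module
    rw [← hMH]
    linear_combination (norm := module) hCV
  · intro hii
    have hCCV : crossProduct M (crossProduct M V) = -V := by
      rw [cross_cross3', hMV, hMM]; module
    have hcv : crossProduct M V
        = H - (H ⬝ᵥ M) • M - (τ * ‖v t‖ ^ 2) • M - τ • A - α • V := by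
      linear_combination (norm := module) hii
    have hC2 : crossProduct M (crossProduct M V)
        = crossProduct M H - τ • crossProduct M A - α • crossProduct M V := by
      conv_lhs => rw [hcv]
      simp only [map_sub, LinearMap.map_smul, cross_self, smul_zero, sub_zero]
    rw [lin]
    linear_combination (norm := module) hCCV - hC2
end

section
/- Let α, τ > 0, let h : [0,∞) → ℝ³ be any function, and let m : [0,∞) → ℝ³ be twice differentiable with |m(t)| = 1 for all t ≥ 0. Define the angular momentum w(t) := m(t) × m'(t). Then: (a) m'(t) = −m(t) × w(t) for all t ≥ 0; and (b) m satisfies the inertial Landau–Lifshitz–Gilbert equation m' = −m × (h − α m' − τ m'') for all t ≥ 0 if and only if τ w' = m × h − α (m × m') − m × w for all t ≥ 0. -/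
open scoped InnerProductSpace

lemma cross3_apply (a b : EuclideanSpace ℝ (Fin 3)) (i : Fin 3) :
    cross3 a b i = ![a 1 * b 2 - a 2 * b 1, a 2 * b 0 - a 0 * b 2, a 0 * b 1 - a 1 * b 0] i := by
  show crossProduct (a : Fin 3 → ℝ) (b : Fin 3 → ℝ) i = _
  rw [cross_apply]

lemma norm_sq_eq (x : EuclideanSpace ℝ (Fin 3)) (hx : ‖x‖ = 1) :
    x 0^2 + x 1^2 + x 2^2 = 1 := by
  rw [EuclideanSpace.norm_eq, Real.sqrt_eq_one] at hx
  simpa [Fin.sum_univ_three, sq] using hx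

lemma comp_deriv {f : ℝ → EuclideanSpace ℝ (Fin 3)} {f' : EuclideanSpace ℝ (Fin 3)}
    {s : Set ℝ} {t : ℝ} (hf : HasDerivWithinAt f f' s t) (i : Fin 3) :
    HasDerivWithinAt (fun t => f t i) (f' i) s t := by
  have := (EuclideanSpace.proj i).hasFDerivAt.comp_hasDerivWithinAt t hf
  exact this

lemma deriv_of_comps {f : ℝ → EuclideanSpace ℝ (Fin 3)} {f' : EuclideanSpace ℝ (Fin 3)}
    {s : Set ℝ} {t : ℝ} (hf : ∀ i, HasDerivWithinAt (fun t => f t i) (f' i) s t) :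
    HasDerivWithinAt f f' s t := by
  have h1 : HasDerivWithinAt (fun t => (WithLp.equiv 2 (Fin 3 → ℝ)) (f t))
      ((WithLp.equiv 2 (Fin 3 → ℝ)) f') s t := hasDerivWithinAt_pi.2 hf
  have := ((PiLp.continuousLinearEquiv 2 ℝ (fun _ : Fin 3 => ℝ)).symm :
      (Fin 3 → ℝ) →L[ℝ] EuclideanSpace ℝ (Fin 3)).hasFDerivAt.comp_hasDerivWithinAt t h1
  exact this

lemma cross3_bilin (p x y z : EuclideanSpace ℝ (Fin 3)) (α τ : ℝ) :
    cross3 p (x - α • y - τ • z) = cross3 p x - α • cross3 p y - τ • cross3 p z := by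
  ext i
  fin_cases i <;>
    simp [cross3_apply, PiLp.sub_apply, PiLp.smul_apply] <;> ring


/-- First-order reformulation of the inertial LLG equation via the angular momentum
`w = m × m'`: for any twice differentiable `m : [0,∞) → ℝ³` with `|m(t)| = 1` for all
`t ≥ 0`, (a) `m' = −m × w` on `[0,∞)`, and (b) `m` solves
`m' = −m × (h − α m' − τ m'')` on `[0,∞)` if and only if
`τ w' = m × h − α (m × m') − m × w` on `[0,∞)`. -/
theorem illg_iff_angular_momentum_form
    (α τ : ℝ) (hα : 0 < α) (hτ : 0 < τ)
    (h m v a dw : ℝ → EuclideanSpace ℝ (Fin 3))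
    (hm : ∀ t ∈ Set.Ici (0 : ℝ), HasDerivWithinAt m (v t) (Set.Ici 0) t)
    (hv : ∀ t ∈ Set.Ici (0 : ℝ), HasDerivWithinAt v (a t) (Set.Ici 0) t)
    (hunit : ∀ t ∈ Set.Ici (0 : ℝ), ‖m t‖ = 1)
    (w : ℝ → EuclideanSpace ℝ (Fin 3)) (hw : w = fun t => cross3 (m t) (v t))
    (hdw : ∀ t ∈ Set.Ici (0 : ℝ), HasDerivWithinAt w (dw t) (Set.Ici 0) t) :
    (∀ t ∈ Set.Ici (0 : ℝ), v t = -cross3 (m t) (w t)) ∧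
      ((∀ t ∈ Set.Ici (0 : ℝ), v t = -cross3 (m t) (h t - α • v t - τ • a t))
        ↔ (∀ t ∈ Set.Ici (0 : ℝ),
            τ • dw t = cross3 (m t) (h t) - α • cross3 (m t) (v t) - cross3 (m t) (w t))) := by
  subst hw
  -- orthogonality
  have orth : ∀ t ∈ Set.Ici (0 : ℝ),
      m t 0 * v t 0 + m t 1 * v t 1 + m t 2 * v t 2 = 0 := by
    intro t ht
    set g : ℝ → ℝ := fun t => (m t 0)^2 + (m t 1)^2 + (m t 2)^2 with hg
    have hg1 : HasDerivWithinAt g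
        (2 * (m t 0) * (v t 0) + 2 * (m t 1) * (v t 1) + 2 * (m t 2) * (v t 2))
        (Set.Ici 0) t := by
      have hmi := fun i => comp_deriv (hm t ht) i
      have : HasDerivWithinAt g
          (2 * (m t 0)^1 * (v t 0) + (2 * (m t 1)^1 * (v t 1) + 2 * (m t 2)^1 * (v t 2)))
          (Set.Ici 0) t := (((hmi 0).pow 2).add (((hmi 1).pow 2).add ((hmi 2).pow 2))).congr
            (fun y _ => by simp [hg]; ring) (by simp [hg]; ring)
      simpa using this.congr (fun y _ => rfl) rfl |>.congr_deriv (by ring)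
    have hg0 : HasDerivWithinAt g 0 (Set.Ici 0) t :=
      (hasDerivWithinAt_const t _ (1:ℝ)).congr
        (fun y hy => norm_sq_eq _ (hunit y hy)) (norm_sq_eq _ (hunit t ht))
    have ud := (uniqueDiffOn_Ici (0:ℝ)) t ht
    have := (hg1.derivWithin ud).symm.trans (hg0.derivWithin ud)
    linarith
  have unit : ∀ t ∈ Set.Ici (0 : ℝ),
      (m t 0)^2 + (m t 1)^2 + (m t 2)^2 = 1 := fun t ht => norm_sq_eq _ (hunit t ht)
  -- triple product
  have trip : ∀ t ∈ Set.Ici (0 : ℝ),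
      cross3 (m t) (cross3 (m t) (v t)) = -(v t) := by
    intro t ht
    have o := orth t ht
    have u := unit t ht
    ext i
    fin_cases i <;> simp [cross3_apply, PiLp.neg_apply]
    · linear_combination (m t 0) * o - (v t 0) * u
    · linear_combination (m t 1) * o - (v t 1) * u
    · linear_combination (m t 2) * o - (v t 2) * u
  have parta : ∀ t ∈ Set.Ici (0 : ℝ), v t = -cross3 (m t) (cross3 (m t) (v t)) := by
    intro t ht; rw [trip t ht, neg_neg]
  -- derivative of w
  have dweq : ∀ t ∈ Set.Ici (0 : ℝ), dw t = cross3 (m t) (a t) := by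
    intro t ht
    have whd : HasDerivWithinAt (fun t => cross3 (m t) (v t)) (cross3 (m t) (a t))
        (Set.Ici 0) t := by
      apply deriv_of_comps
      intro i
      have hmi := fun j => comp_deriv (hm t ht) j
      have hvi := fun j => comp_deriv (hv t ht) j
      fin_cases i
      · have : HasDerivWithinAt (fun t => m t 1 * v t 2 - m t 2 * v t 1)
            (v t 1 * v t 2 + m t 1 * a t 2 - (v t 2 * v t 1 + m t 2 * a t 1))
            (Set.Ici 0) t := (((hmi 1).mul (hvi 2)).sub ((hmi 2).mul (hvi 1)))
        refine (this.congr (fun y _ => ?_) ?_).congr_deriv ?_ <;>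
          simp [cross3_apply] <;> ring
      · have : HasDerivWithinAt (fun t => m t 2 * v t 0 - m t 0 * v t 2)
            (v t 2 * v t 0 + m t 2 * a t 0 - (v t 0 * v t 2 + m t 0 * a t 2))
            (Set.Ici 0) t := (((hmi 2).mul (hvi 0)).sub ((hmi 0).mul (hvi 2)))
        refine (this.congr (fun y _ => ?_) ?_).congr_deriv ?_ <;>
          simp [cross3_apply] <;> ring
      · have : HasDerivWithinAt (fun t => m t 0 * v t 1 - m t 1 * v t 0)
            (v t 0 * v t 1 + m t 0 * a t 1 - (v t 1 * v t 0 + m t 1 * a t 0))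
            (Set.Ici 0) t := (((hmi 0).mul (hvi 1)).sub ((hmi 1).mul (hvi 0)))
        refine (this.congr (fun y _ => ?_) ?_).congr_deriv ?_ <;>
          simp [cross3_apply] <;> ring
    have ud := (uniqueDiffOn_Ici (0:ℝ)) t ht
    exact ((hdw t ht).derivWithin ud).symm.trans (whd.derivWithin ud)
  refine ⟨parta, ?_, ?_⟩
  · intro hL t ht
    have e := hL t ht
    rw [cross3_bilin] at e
    rw [dweq t ht, trip t ht]
    linear_combination (norm := module) -e
  · intro hR t ht
    have e := hR t ht
    rw [dweq t ht, trip t ht] at e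
    rw [cross3_bilin]
    linear_combination (norm := module) -e
end

section
/- Let k ∈ ℝ, τ > 0, and let m⁻, m⁺, w⁻, w⁺, g ∈ ℝ³ satisfy m⁺ − m⁻ = −k ((m⁺ + m⁻)/2) × ((w⁺ + w⁻)/2) and τ (w⁺ − w⁻) = k ((m⁺ + m⁻)/2) × g. Then m⁺·w⁺ = m⁻·w⁻. In particular, if m⁻·w⁻ = 0 then m⁺·w⁺ = 0, so the midpoint angular momentum method preserves the orthogonality of magnetization and angular momentum at every vertex of the mesh. -/
open scoped InnerProductSpace

/-- The coupled midpoint updates `m⁺ − m⁻ = −k ((m⁺+m⁻)/2) × ((w⁺+w⁻)/2)` and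
`τ(w⁺ − w⁻) = k ((m⁺+m⁻)/2) × g` of the angular momentum method preserve the
orthogonality of magnetization and angular momentum: `m⁺·w⁺ = m⁻·w⁻`; in particular,
if `m⁻·w⁻ = 0` then `m⁺·w⁺ = 0`. -/
theorem midpoint_update_preserves_orthogonality
    (k τ : ℝ) (hτ : 0 < τ)
    (mminus mplus wminus wplus g : EuclideanSpace ℝ (Fin 3))
    (hm : mplus - mminus
      = -(k • cross3 ((2 : ℝ)⁻¹ • (mplus + mminus)) ((2 : ℝ)⁻¹ • (wplus + wminus))))
    (hw : τ • (wplus - wminus) = k • cross3 ((2 : ℝ)⁻¹ • (mplus + mminus)) g) :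
    ⟪mplus, wplus⟫_ℝ = ⟪mminus, wminus⟫_ℝ ∧
      (⟪mminus, wminus⟫_ℝ = 0 → ⟪mplus, wplus⟫_ℝ = 0) := by
  have key : ⟪mplus, wplus⟫_ℝ = ⟪mminus, wminus⟫_ℝ := by
    have hm0 := congrFun (congrArg (fun v : EuclideanSpace ℝ (Fin 3) => (v : Fin 3 → ℝ)) hm) 0
    have hm1 := congrFun (congrArg (fun v : EuclideanSpace ℝ (Fin 3) => (v : Fin 3 → ℝ)) hm) 1
    have hm2 := congrFun (congrArg (fun v : EuclideanSpace ℝ (Fin 3) => (v : Fin 3 → ℝ)) hm) 2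
    have hw0 := congrFun (congrArg (fun v : EuclideanSpace ℝ (Fin 3) => (v : Fin 3 → ℝ)) hw) 0
    have hw1 := congrFun (congrArg (fun v : EuclideanSpace ℝ (Fin 3) => (v : Fin 3 → ℝ)) hw) 1
    have hw2 := congrFun (congrArg (fun v : EuclideanSpace ℝ (Fin 3) => (v : Fin 3 → ℝ)) hw) 2
    simp only [cross3, crossProduct, WithLp.equiv_symm_apply, WithLp.equiv_apply, PiLp.toLp_apply,
      PiLp.sub_apply, PiLp.add_apply, PiLp.smul_apply, PiLp.neg_apply, smul_eq_mul,
      LinearMap.mk₂_apply, Matrix.cons_val_zero, Matrix.cons_val_one, Matrix.head_cons,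
      Matrix.cons_val_two, Matrix.tail_cons, Pi.sub_apply, Pi.add_apply, Pi.smul_apply,
      Pi.neg_apply] at hm0 hm1 hm2 hw0 hw1 hw2
    have h2 : τ * ((mplus 0 * wplus 0 + mplus 1 * wplus 1 + mplus 2 * wplus 2) -
        (mminus 0 * wminus 0 + mminus 1 * wminus 1 + mminus 2 * wminus 2)) = 0 := by
      linear_combination (τ * 2⁻¹ * (wplus 0 + wminus 0)) * hm0 +
        (τ * 2⁻¹ * (wplus 1 + wminus 1)) * hm1 +
        (τ * 2⁻¹ * (wplus 2 + wminus 2)) * hm2 +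
        (2⁻¹ * (mplus 0 + mminus 0)) * hw0 +
        (2⁻¹ * (mplus 1 + mminus 1)) * hw1 +
        (2⁻¹ * (mplus 2 + mminus 2)) * hw2
    have h3 := (mul_eq_zero.mp h2).resolve_left (ne_of_gt hτ)
    simp only [PiLp.inner_apply, RCLike.inner_apply, conj_trivial, Fin.sum_univ_three]
    linarith
  exact ⟨key, fun h => key.trans h⟩
end

section
/- Let k ∈ ℝ and u, z, m ∈ ℝ³ satisfy 2u + k (u × z) = 2m. Then |2u − m| = |m|. In particular, if |m| = 1, then the updated nodal magnetization 2u − m again has unit length, so the linearized angular momentum method preserves the unit-length constraint at every vertex of the mesh. -/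
open scoped InnerProductSpace

lemma inner_cross3_self (u z : EuclideanSpace ℝ (Fin 3)) : ⟪u, cross3 u z⟫_ℝ = 0 := by
  simp only [cross3, PiLp.inner_apply, RCLike.inner_apply, conj_trivial]
  simp [crossProduct, Fin.sum_univ_three]
  ring

/-- If `u, z, m ∈ ℝ³` satisfy `2u + k (u × z) = 2m`, then `|2u − m| = |m|`; in
particular, if `|m| = 1` then the updated nodal magnetization `2u − m` again has unit
length, so the linearized angular momentum method preserves the unit-length constraint. -/
theorem linearized_step_preserves_length
    (k : ℝ) (u z m : EuclideanSpace ℝ (Fin 3))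
    (heq : (2 : ℝ) • u + k • cross3 u z = (2 : ℝ) • m) :
    ‖(2 : ℝ) • u - m‖ = ‖m‖ ∧ (‖m‖ = 1 → ‖(2 : ℝ) • u - m‖ = 1) := by
  have hc := inner_cross3_self u z
  have h2 : ⟪u, (2:ℝ) • m⟫_ℝ = ⟪u, (2:ℝ) • u + k • cross3 u z⟫_ℝ := by rw [heq]
  rw [inner_add_right, inner_smul_right, inner_smul_right, inner_smul_right, hc,
    real_inner_self_eq_norm_sq] at h2
  have key : ‖(2:ℝ) • u - m‖^2 = ‖m‖^2 := by
    rw [norm_sub_sq_real, inner_smul_left, norm_smul]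
    simp only [conj_trivial, Real.norm_ofNat]
    nlinarith [h2]
  have h : ‖(2:ℝ) • u - m‖ = ‖m‖ := by
    have := congrArg Real.sqrt key
    rwa [Real.sqrt_sq (norm_nonneg _), Real.sqrt_sq (norm_nonneg _)] at this
  exact ⟨h, fun hm => by rw [h, hm]⟩
end
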